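/- Consider n ≥ 1 disjoint translates V₁, …, V_n of the six-point configuration I = {(1,4),(2,2),(3,6),(4,1),(5,5),(6,3)}, where Vᵢ is I translated by (6(i−1), 6(i−1)). Then 4n − 1 axis-parallel lines suffice to hit all segments between pairs of distinct points of V = ⋃ᵢ Vᵢ, with exactly 3 of these lines hitting segments of Seg(Vᵢ) for each i. -/
import Mathlib


open scoped Classical

/-- An axis-parallel line in the plane: `vert a` is the line `x = a`,
`horiz b` is the line `y = b`. -/
inductive ALine where
  | vert : ℝ → ALine
  | horiz : ℝ → ALine

/-- `a` lies strictly between `u` and `v`. -/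
def strictBetween (a u v : ℝ) : Prop := (u < a ∧ a < v) ∨ (v < a ∧ a < u)

/-- An axis-parallel line hits the segment joining `p` and `q` iff it meets the
relative interior of the segment but neither endpoint. -/
def ALine.hits : ALine → ℝ × ℝ → ℝ × ℝ → Prop
  | .vert a, p, q => strictBetween a p.1 q.1
  | .horiz b, p, q => strictBetween b p.2 q.2

/-- The line contains the point `p`. -/
def ALine.containsPt : ALine → ℝ × ℝ → Prop
  | .vert a, p => p.1 = a
  | .horiz b, p => p.2 = b

/-- The line is vertical. -/
def ALine.isVert : ALine → Prop
  | .vert _ => True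
  | .horiz _ => False

/-- The line is horizontal. -/
def ALine.isHoriz : ALine → Prop
  | .vert _ => False
  | .horiz _ => True

/-- Two layouts (assignments of centers to the items indexed by `ι`) have the
same orthogonal order. -/
def orthOrder {ι : Type*} (f g : ι → ℝ × ℝ) : Prop :=
  ∀ i j : ι,
    ((f i).1 < (f j).1 ↔ (g i).1 < (g j).1) ∧
    ((f i).1 = (f j).1 ↔ (g i).1 = (g j).1) ∧
    ((f i).2 < (f j).2 ↔ (g i).2 < (g j).2) ∧
    ((f i).2 = (f j).2 ↔ (g i).2 = (g j).2)

/-- A layout of unit squares is disjoint iff any two distinct centers are at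
distance at least 1 in the `x`- or the `y`-coordinate. -/
def disjointUnitLayout {ι : Type*} (f : ι → ℝ × ℝ) : Prop :=
  ∀ i j : ι, i ≠ j → 1 ≤ |(f i).1 - (f j).1| ∨ 1 ≤ |(f i).2 - (f j).2|

/-- Width of the bounding box of a layout of unit squares. -/
noncomputable def unitWidth {n : ℕ} (f : Fin n → ℝ × ℝ) : ℝ :=
  (⨆ i, (f i).1) - (⨅ i, (f i).1) + 1

/-- Height of the bounding box of a layout of unit squares. -/
noncomputable def unitHeight {n : ℕ} (f : Fin n → ℝ × ℝ) : ℝ :=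
  (⨆ i, (f i).2) - (⨅ i, (f i).2) + 1

/-- The basic six-point variable gadget. -/
noncomputable def gadgetI : Finset (ℝ × ℝ) := {(1,4), (2,2), (3,6), (4,1), (5,5), (6,3)}


private lemma sb_shift {x u v c : ℝ} (h : strictBetween x u v) :
    strictBetween (x + c) (u + c) (v + c) := by
  rcases h with ⟨h1, h2⟩ | ⟨h1, h2⟩
  · exact Or.inl ⟨by linarith, by linarith⟩
  · exact Or.inr ⟨by linarith, by linarith⟩

private lemma sb_bounds {x u v lo hi : ℝ} (h : strictBetween x u v)
    (h1 : lo ≤ u) (h2 : u ≤ hi) (h3 : lo ≤ v) (h4 : v ≤ hi) :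
    lo < x ∧ x < hi := by
  rcases h with ⟨a, b⟩ | ⟨a, b⟩ <;> exact ⟨by linarith, by linarith⟩

private lemma gadget_mem {p : ℝ × ℝ} (hp : p ∈ gadgetI) :
    p = (1,4) ∨ p = (2,2) ∨ p = (3,6) ∨ p = (4,1) ∨ p = (5,5) ∨ p = (6,3) := by
  simpa [gadgetI] using hp

private lemma gadget_bounds {p : ℝ × ℝ} (hp : p ∈ gadgetI) :
    1 ≤ p.1 ∧ p.1 ≤ 6 ∧ 1 ≤ p.2 ∧ p.2 ≤ 6 := by
  rcases gadget_mem hp with h | h | h | h | h | h <;> subst h <;> norm_num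

private lemma gadget3 {a b : ℝ × ℝ} (ha : a ∈ gadgetI) (hb : b ∈ gadgetI) (hab : a ≠ b) :
    strictBetween 3.5 a.1 b.1 ∨ strictBetween 2.5 a.2 b.2 ∨ strictBetween 4.5 a.2 b.2 := by
  rcases gadget_mem ha with h | h | h | h | h | h <;>
  rcases gadget_mem hb with h' | h' | h' | h' | h' | h' <;>
    subst h <;> subst h' <;>
    first
      | exact absurd rfl hab
      | norm_num [strictBetween]

private lemma nat_eq_of_close {a b : ℕ} (h1 : 6*(a:ℝ) < 6*(b:ℝ) + 6) (h2 : 6*(b:ℝ) < 6*(a:ℝ) + 6) :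
    a = b := by
  by_contra h
  rcases Nat.lt_or_ge a b with H | H
  · have : (a:ℝ) + 1 ≤ b := by exact_mod_cast H
    linarith
  · have H' : b < a := lt_of_le_of_ne H (Ne.symm h)
    have : (b:ℝ) + 1 ≤ a := by exact_mod_cast H'
    linarith

private lemma no_nat_between {a b : ℕ} (h1 : 6*(a:ℝ) < 6*(b:ℝ) - 0.5) (h2 : 6*(b:ℝ) < 6*(a:ℝ) + 5.5) :
    False := by
  rcases Nat.lt_or_ge a b with H | H
  · have : (a:ℝ) + 1 ≤ b := by exact_mod_cast H
    linarith
  · have : (b:ℝ) ≤ a := by exact_mod_cast H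
    linarith

/-- for the `n` diagonal translates `V i` of the six-point gadget
(`V i` is `I` translated by `(6(i−1), 6(i−1))` for `i = 1, …, n`), there is a
set of at most `4n − 1` axis-parallel lines hitting every segment between
distinct points of `⋃ i, V i`, in which exactly 3 lines hit segments induced by
each `V i`. -/
theorem stmt13 (n : ℕ) (hn : 1 ≤ n)
    (V : Fin n → Finset (ℝ × ℝ))
    (hV : ∀ i : Fin n, V i = gadgetI.image (fun p => (p.1 + 6 * (i : ℝ), p.2 + 6 * (i : ℝ)))) :
    ∃ L : Finset ALine,
      L.card ≤ 4 * n - 1 ∧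
      (∀ i j : Fin n, ∀ p ∈ V i, ∀ q ∈ V j, p ≠ q → ∃ l ∈ L, l.hits p q) ∧
      (∀ i : Fin n,
        (L.filter (fun l => ∃ p ∈ V i, ∃ q ∈ V i, p ≠ q ∧ l.hits p q)).card = 3) := by
  classical
  set L1 := (Finset.univ : Finset (Fin n)).image (fun i : Fin n => ALine.vert (3.5 + 6*(i:ℝ))) with hL1
  set L2 := (Finset.univ : Finset (Fin n)).image (fun i : Fin n => ALine.horiz (2.5 + 6*(i:ℝ))) with hL2
  set L3 := (Finset.univ : Finset (Fin n)).image (fun i : Fin n => ALine.horiz (4.5 + 6*(i:ℝ))) with hL3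
  set L4 := (Finset.univ : Finset (Fin (n-1))).image (fun k : Fin (n-1) => ALine.vert (6.5 + 6*(k:ℝ))) with hL4
  have hm1 : ∀ i : Fin n, ALine.vert (3.5 + 6*(i:ℝ)) ∈ L1 ∪ L2 ∪ L3 ∪ L4 := by
    intro i
    refine Finset.mem_union_left _ (Finset.mem_union_left _ (Finset.mem_union_left _ ?_))
    exact Finset.mem_image_of_mem _ (Finset.mem_univ i)
  have hm2 : ∀ i : Fin n, ALine.horiz (2.5 + 6*(i:ℝ)) ∈ L1 ∪ L2 ∪ L3 ∪ L4 := by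
    intro i
    refine Finset.mem_union_left _ (Finset.mem_union_left _ (Finset.mem_union_right _ ?_))
    exact Finset.mem_image_of_mem _ (Finset.mem_univ i)
  have hm3 : ∀ i : Fin n, ALine.horiz (4.5 + 6*(i:ℝ)) ∈ L1 ∪ L2 ∪ L3 ∪ L4 := by
    intro i
    refine Finset.mem_union_left _ (Finset.mem_union_right _ ?_)
    exact Finset.mem_image_of_mem _ (Finset.mem_univ i)
  have hm4 : ∀ k : Fin (n-1), ALine.vert (6.5 + 6*(k:ℝ)) ∈ L1 ∪ L2 ∪ L3 ∪ L4 := by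
    intro k
    refine Finset.mem_union_right _ ?_
    exact Finset.mem_image_of_mem _ (Finset.mem_univ k)
  have hboundsV : ∀ i : Fin n, ∀ p ∈ V i,
      1 + 6*(i:ℝ) ≤ p.1 ∧ p.1 ≤ 6 + 6*(i:ℝ) ∧ 1 + 6*(i:ℝ) ≤ p.2 ∧ p.2 ≤ 6 + 6*(i:ℝ) := by
    intro i p hp
    rw [hV i, Finset.mem_image] at hp
    obtain ⟨a, ha, rfl⟩ := hp
    obtain ⟨b1, b2, b3, b4⟩ := gadget_bounds ha
    exact ⟨by simp; linarith, by simp; linarith, by simp; linarith, by simp; linarith⟩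
  refine ⟨L1 ∪ L2 ∪ L3 ∪ L4, ?_, ?_, ?_⟩
  · have c1 : L1.card ≤ n := le_trans (Finset.card_image_le) (by simp)
    have c2 : L2.card ≤ n := le_trans (Finset.card_image_le) (by simp)
    have c3 : L3.card ≤ n := le_trans (Finset.card_image_le) (by simp)
    have c4 : L4.card ≤ n - 1 := le_trans (Finset.card_image_le) (by simp)
    have h12 := Finset.card_union_le (L1 ∪ L2 ∪ L3) L4
    have h13 := Finset.card_union_le (L1 ∪ L2) L3
    have h14 := Finset.card_union_le L1 L2
    omega
  · intro i j p hp q hq hpq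
    rw [hV i, Finset.mem_image] at hp
    obtain ⟨a, ha, rfl⟩ := hp
    rw [hV j, Finset.mem_image] at hq
    obtain ⟨b, hb, rfl⟩ := hq
    rcases eq_or_ne i j with rfl | hij
    · have hab : a ≠ b := by rintro rfl; exact hpq rfl
      rcases gadget3 ha hb hab with h | h | h
      · exact ⟨ALine.vert (3.5 + 6*(i:ℝ)), hm1 i, sb_shift h⟩
      · exact ⟨ALine.horiz (2.5 + 6*(i:ℝ)), hm2 i, sb_shift h⟩
      · exact ⟨ALine.horiz (4.5 + 6*(i:ℝ)), hm3 i, sb_shift h⟩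
    · obtain ⟨a1, a2, a3, a4⟩ := gadget_bounds ha
      obtain ⟨b1, b2, b3, b4⟩ := gadget_bounds hb
      have hvij : i.val ≠ j.val := fun h => hij (Fin.ext h)
      rcases Nat.lt_or_ge i.val j.val with H | H
      · have hij' : (i:ℝ) + 1 ≤ (j:ℝ) := by exact_mod_cast H
        have hkm : ALine.vert (6.5 + 6*(i:ℝ)) ∈ L1 ∪ L2 ∪ L3 ∪ L4 := by
          have := hm4 ⟨i.val, by omega⟩
          simpa using this
        refine ⟨ALine.vert (6.5 + 6*(i:ℝ)), hkm, Or.inl ⟨?_, ?_⟩⟩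
        · simp; linarith
        · simp; linarith
      · have H' : j.val < i.val := lt_of_le_of_ne H (Ne.symm hvij)
        have hij' : (j:ℝ) + 1 ≤ (i:ℝ) := by exact_mod_cast H'
        have hkm : ALine.vert (6.5 + 6*(j:ℝ)) ∈ L1 ∪ L2 ∪ L3 ∪ L4 := by
          have := hm4 ⟨j.val, by omega⟩
          simpa using this
        refine ⟨ALine.vert (6.5 + 6*(j:ℝ)), hkm, Or.inr ⟨?_, ?_⟩⟩
        · simp; linarith
        · simp; linarith
  · intro i
    have hfe : (L1 ∪ L2 ∪ L3 ∪ L4).filter (fun l => ∃ p ∈ V i, ∃ q ∈ V i, p ≠ q ∧ l.hits p q)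
        = {ALine.vert (3.5 + 6*(i:ℝ)), ALine.horiz (2.5 + 6*(i:ℝ)), ALine.horiz (4.5 + 6*(i:ℝ))} := by
      ext l
      simp only [Finset.mem_filter, Finset.mem_insert, Finset.mem_singleton]
      constructor
      · rintro ⟨hmem, p, hp, q, hq, hpq, hhit⟩
        obtain ⟨p1, p2, p3, p4⟩ := hboundsV i p hp
        obtain ⟨q1, q2, q3, q4⟩ := hboundsV i q hq
        simp only [Finset.mem_union, hL1, hL2, hL3, hL4, Finset.mem_image,
          Finset.mem_univ, true_and] at hmem
        rcases hmem with ((⟨m, hm⟩ | ⟨m, hm⟩) | ⟨m, hm⟩) | ⟨k, hk⟩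
        · subst hm
          obtain ⟨e1, e2⟩ := sb_bounds hhit p1 p2 q1 q2
          have : m.val = i.val := nat_eq_of_close (by linarith) (by linarith)
          have : m = i := Fin.ext this
          subst this
          exact Or.inl rfl
        · subst hm
          obtain ⟨e1, e2⟩ := sb_bounds hhit p3 p4 q3 q4
          have : m.val = i.val := nat_eq_of_close (by linarith) (by linarith)
          have : m = i := Fin.ext this
          subst this
          exact Or.inr (Or.inl rfl)
        · subst hm
          obtain ⟨e1, e2⟩ := sb_bounds hhit p3 p4 q3 q4
          have : m.val = i.val := nat_eq_of_close (by linarith) (by linarith)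
          have : m = i := Fin.ext this
          subst this
          exact Or.inr (Or.inr rfl)
        · subst hk
          obtain ⟨e1, e2⟩ := sb_bounds hhit p1 p2 q1 q2
          exact absurd (no_nat_between (a := k.val) (b := i.val) (by norm_num; linarith)
            (by norm_num; linarith)) (fun h => h)
      · have hp1 : ((1:ℝ) + 6*(i:ℝ), (4:ℝ) + 6*(i:ℝ)) ∈ V i := by
          rw [hV i, Finset.mem_image]
          exact ⟨(1,4), by simp [gadgetI], rfl⟩
        have hp2 : ((2:ℝ) + 6*(i:ℝ), (2:ℝ) + 6*(i:ℝ)) ∈ V i := by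
          rw [hV i, Finset.mem_image]
          exact ⟨(2,2), by simp [gadgetI], rfl⟩
        have hp3 : ((3:ℝ) + 6*(i:ℝ), (6:ℝ) + 6*(i:ℝ)) ∈ V i := by
          rw [hV i, Finset.mem_image]
          exact ⟨(3,6), by simp [gadgetI], rfl⟩
        have hp4 : ((4:ℝ) + 6*(i:ℝ), (1:ℝ) + 6*(i:ℝ)) ∈ V i := by
          rw [hV i, Finset.mem_image]
          exact ⟨(4,1), by simp [gadgetI], rfl⟩
        rintro (rfl | rfl | rfl)
        · refine ⟨hm1 i, _, hp1, _, hp4, ?_, Or.inl ⟨by norm_num, by norm_num⟩⟩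
          intro h
          have h1 : (1:ℝ) + 6*(i:ℝ) = 4 + 6*(i:ℝ) := congrArg Prod.fst h
          linarith
        · refine ⟨hm2 i, _, hp1, _, hp2, ?_, Or.inr ⟨by norm_num, by norm_num⟩⟩
          intro h
          have h1 : (1:ℝ) + 6*(i:ℝ) = 2 + 6*(i:ℝ) := congrArg Prod.fst h
          linarith
        · refine ⟨hm3 i, _, hp1, _, hp3, ?_, Or.inl ⟨by norm_num, by norm_num⟩⟩
          intro h
          have h1 : (1:ℝ) + 6*(i:ℝ) = 3 + 6*(i:ℝ) := congrArg Prod.fst h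
          linarith
    rw [hfe]
    rw [Finset.card_insert_of_notMem, Finset.card_insert_of_notMem, Finset.card_singleton]
    · simp only [Finset.mem_singleton]
      intro h
      have : (2.5:ℝ) + 6*(i:ℝ) = 4.5 + 6*(i:ℝ) := by injection h
      linarith
    · simp only [Finset.mem_insert, Finset.mem_singleton]
      rintro (h | h) <;> exact ALine.noConfusion h
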